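/- The outside-in grammar of normal-order contexts (N ::= N̄ | λx.N with N̄ ::= □ | N̄ t | a N, where a ranges over neutral terms) and the inside-out grammar (N ::= N' | N[□ t] with N' ::= □ | N'[λx.□] | N[a □]) generate the same set of one-hole contexts. -/
import Mathlib


set_option autoImplicit false
set_option maxHeartbeats 1000000

namespace Stmt2

inductive Term : Type
  | var : ℕ → Term
  | app : Term → Term → Term
  | lam : Term → Term
  deriving DecidableEq

mutual
  inductive Neutral : Term → Prop
    | var (n : ℕ) : Neutral (.var n)
    | app {a n : Term} : Neutral a → NormalT n → Neutral (.app a n)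
  inductive NormalT : Term → Prop
    | lam {t : Term} : NormalT t → NormalT (.lam t)
    | neu {a : Term} : Neutral a → NormalT a
end

/-- One-hole contexts over (de Bruijn) lambda terms. -/
inductive Ctx : Type
  | hole : Ctx
  | appL : Ctx → Term → Ctx
  | appR : Term → Ctx → Ctx
  | lam : Ctx → Ctx

/-- Plugging a term into the hole of a context. -/
def Ctx.plug : Ctx → Term → Term
  | .hole, s => s
  | .appL C t, s => .app (Ctx.plug C s) t
  | .appR t C, s => .app t (Ctx.plug C s)
  | .lam C, s => .lam (Ctx.plug C s)

/-- Composition of contexts: plugging a context into the hole of a context. -/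
def Ctx.comp : Ctx → Ctx → Ctx
  | .hole, D => D
  | .appL C t, D => .appL (Ctx.comp C D) t
  | .appR t C, D => .appR t (Ctx.comp C D)
  | .lam C, D => .lam (Ctx.comp C D)

/- The (outside-in) grammar of normal-order contexts:
`N ::= N̄ | λx.N` and `N̄ ::= □ | N̄ t | a N` with `a` neutral. -/
mutual
  inductive NOCtx : Ctx → Prop
    | bar {C : Ctx} : NOBar C → NOCtx C
    | lam {C : Ctx} : NOCtx C → NOCtx (.lam C)
  inductive NOBar : Ctx → Prop
    | hole : NOBar .hole
    | appL {C : Ctx} {t : Term} : NOBar C → NOBar (.appL C t)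
    | appR {a : Term} {C : Ctx} : Neutral a → NOCtx C → NOBar (.appR a C)
end

/- The inside-out grammar of normal-order contexts:
`N ::= N' | N[□ t]` and `N' ::= □ | N'[λx.□] | N[a □]` with `a` neutral,
where `N[f]` is composition of contexts. -/
mutual
  inductive IOCtx : Ctx → Prop
    | und {C : Ctx} : IOUnd C → IOCtx C
    | frame {C : Ctx} {t : Term} : IOCtx C → IOCtx (C.comp (.appL .hole t))
  inductive IOUnd : Ctx → Prop
    | hole : IOUnd .hole
    | lamf {C : Ctx} : IOUnd C → IOUnd (C.comp (.lam .hole))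
    | appf {C : Ctx} {a : Term} : Neutral a → IOCtx C → IOUnd (C.comp (.appR a .hole))
end

theorem comp_hole (C : Ctx) : C.comp .hole = C := by
  induction C <;> simp [Ctx.comp, *]

theorem comp_assoc (C D E : Ctx) : (C.comp D).comp E = C.comp (D.comp E) := by
  induction C <;> simp [Ctx.comp, *]

theorem no_io {C : Ctx} (h : NOCtx C) : ∀ D : Ctx, IOUnd D → IOCtx (D.comp C) := by
  induction h using NOCtx.rec
    (motive_2 := fun C _ => ∀ D : Ctx, IOCtx D → IOCtx (D.comp C)) with
  | bar _ ih => exact fun D hD => ih D (.und hD)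
  | lam _ ih => intro D hD
                have := ih (D.comp (.lam .hole)) (.lamf hD)
                rwa [comp_assoc] at this
  | hole => rename_i D hD; rw [comp_hole]; exact hD
  | @appL C t _ ih =>
      rename_i D hD
      have := ih (D.comp (.appL .hole t)) (.frame hD)
      rwa [comp_assoc] at this
  | @appR a C ha _ ih =>
      rename_i D hD
      have := ih (D.comp (.appR a .hole)) (.appf ha hD)
      rwa [comp_assoc] at this

theorem io_no {C : Ctx} (h : IOCtx C) : ∀ D : Ctx, NOBar D → NOCtx (C.comp D) := by
  induction h using IOCtx.rec
    (motive_2 := fun C _ => ∀ D : Ctx, NOCtx D → NOCtx (C.comp D)) with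
  | und _ ih => exact fun D hD => ih D (.bar hD)
  | @frame C t _ ih =>
      intro D hD
      have := ih (.appL D t) (.appL hD)
      rwa [comp_assoc]
  | hole => rename_i D hD; exact hD
  | lamf _ ih =>
      rename_i D hD
      have := ih (.lam D) (.lam hD)
      rwa [comp_assoc]
  | @appf C a ha _ ih =>
      rename_i D hD
      have := ih (.appR a D) (.appR ha hD)
      rwa [comp_assoc]

/-- The outside-in and the inside-out grammars of normal-order contexts generate
the same set of one-hole contexts. -/
theorem grammars_generate_same_contexts (C : Ctx) : NOCtx C ↔ IOCtx C := by
  constructor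
  · intro h
    exact no_io h .hole .hole
  · intro h
    have := io_no h .hole .hole
    rwa [comp_hole] at this

end Stmt2
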